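/- arXiv:2512.16195 — 9 statements merged into one kernel-verified Lean document; each statement's English description precedes it below -/
import Mathlib

section
/- For each multi-index (s₁,…,s_r) of nonnegative integers, the non-positive multiple polylogarithm Li⁻_{(s₁,…,s_r)}(z) = ∑_{n₁>⋯>n_r>0} n₁^{s₁}⋯n_r^{s_r} z^{n₁} is a rational function lying in ℚ[z, 1/(1-z)]; more precisely it lies in (z/(1-z))·ℚ[z, 1/(1-z)]. -/
open PowerSeries Finset

/-- Coefficient at `z^n` of the non-positive MPL attached to an index list:
for `s = (s₁,…,s_r)` this is `∑_{n = n₁ > n₂ > ⋯ > n_r > 0} n₁^{s₁}⋯n_r^{s_r}`. -/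
def liCoeff : List ℕ → ℕ → ℚ
  | [], n => if n = 0 then 1 else 0
  | s :: t, n => if n = 0 then 0 else (n : ℚ) ^ s * ∑ m ∈ Finset.range n, liCoeff t m

/-- The non-positive multiple polylogarithm
`Li⁻_{(s₁,…,s_r)}(z) = ∑_{n₁>⋯>n_r>0} n₁^{s₁}⋯n_r^{s_r} z^{n₁} ∈ ℚ⟦z⟧`. -/
noncomputable def Li (s : List ℕ) : PowerSeries ℚ := PowerSeries.mk (liCoeff s)

/-!
Two recursions generate every `Li s`: prepending `0` to the index multiplies by `z/(1-z)`
(the coefficients of `Li (0 :: t)` are partial sums of those of `Li t`), and raising the first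
index by one applies the Euler operator `z·d/dz`. The algebra `ℚ[z, 1/(1-z)]` is stable under
`d/dz`, since `(1/(1-z))' = (1/(1-z))²`, and `z·d/dz` maps `(z/(1-z))·ℚ[z, 1/(1-z)]` into itself.
-/

open scoped Algebra

theorem Derivation.map_mem_adjoin {R A : Type*} [CommSemiring R] [CommSemiring A] [Algebra R A]
    (D : Derivation R A A) {s : Set A} (hs : ∀ x ∈ s, D x ∈ Algebra.adjoin R s) {a : A}
    (ha : a ∈ Algebra.adjoin R s) : D a ∈ Algebra.adjoin R s := by
  induction ha using Algebra.adjoin_induction with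
  | mem x hx => exact hs x hx
  | algebraMap r => simp
  | add x y _ _ hx hy => simpa using add_mem hx hy
  | mul x y hx hy hDx hDy =>
    rw [D.leibniz, smul_eq_mul, smul_eq_mul]
    exact add_mem (mul_mem hx hDy) (mul_mem hy hDx)

namespace PowerSeries

theorem coeff_X_mul_derivative {R : Type*} [CommSemiring R] (f : R⟦X⟧) (n : ℕ) :
    coeff n (X * d⁄dX R f) = n * coeff n f := by
  cases n with
  | zero => simp
  | succ n =>
    rw [coeff_succ_X_mul, coeff_derivative]
    push_cast
    ring

variable {k : Type*} [Field k]

theorem X_mem_adjoin_X_inv_one_sub_X : (X : k⟦X⟧) ∈ k[X, (1 - X)⁻¹ : k⟦X⟧] :=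
  Algebra.subset_adjoin (by simp)

theorem inv_one_sub_X_mem_adjoin_X_inv_one_sub_X :
    (1 - X : k⟦X⟧)⁻¹ ∈ k[X, (1 - X)⁻¹ : k⟦X⟧] :=
  Algebra.subset_adjoin (by simp)

theorem derivative_mem_adjoin_X_inv_one_sub_X {f : k⟦X⟧} (hf : f ∈ k[X, (1 - X)⁻¹ : k⟦X⟧]) :
    d⁄dX k f ∈ k[X, (1 - X)⁻¹ : k⟦X⟧] := by
  refine (d⁄dX k).map_mem_adjoin ?_ hf
  rintro x (rfl | rfl)
  · simp
  · simpa using pow_mem inv_one_sub_X_mem_adjoin_X_inv_one_sub_X 2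

theorem exists_X_mul_derivative_eq {g : k⟦X⟧} (hg : g ∈ k[X, (1 - X)⁻¹ : k⟦X⟧]) :
    ∃ g' ∈ k[X, (1 - X)⁻¹ : k⟦X⟧], X * d⁄dX k (X * (1 - X)⁻¹ * g) = X * (1 - X)⁻¹ * g' := by
  have hX := X_mem_adjoin_X_inv_one_sub_X (k := k)
  have hinv := inv_one_sub_X_mem_adjoin_X_inv_one_sub_X (k := k)
  refine ⟨g + X * (1 - X)⁻¹ * g + X * d⁄dX k g,
    add_mem (add_mem hg (mul_mem (mul_mem hX hinv) hg))
      (mul_mem hX (derivative_mem_adjoin_X_inv_one_sub_X hg)), ?_⟩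
  simp only [Derivation.leibniz, derivative_inv', smul_eq_mul, map_sub, derivative_X,
    derivative_one]
  ring

end PowerSeries

theorem Li_nil : Li [] = 1 := by
  ext n
  simp [Li, liCoeff, coeff_one]

theorem one_sub_X_mul_Li_zero_cons (t : List ℕ) : (1 - X) * Li (0 :: t) = X * Li t := by
  ext n
  rw [sub_mul, one_mul, map_sub]
  cases n with
  | zero => simp [Li, liCoeff]
  | succ n =>
    simp only [coeff_succ_X_mul, Li, coeff_mk]
    cases n with
    | zero => simp [liCoeff]
    | succ n => simp [liCoeff, Finset.sum_range_succ]

theorem Li_zero_cons (t : List ℕ) : Li (0 :: t) = X * (1 - X)⁻¹ * Li t := by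
  rw [mul_comm X, mul_assoc, ← one_sub_X_mul_Li_zero_cons, ← mul_assoc,
    PowerSeries.inv_mul_cancel _ (by simp), one_mul]

theorem Li_succ_cons (s : ℕ) (t : List ℕ) : Li ((s + 1) :: t) = X * d⁄dX ℚ (Li (s :: t)) := by
  ext n
  rw [coeff_X_mul_derivative]
  cases n with
  | zero => simp [Li, liCoeff]
  | succ n =>
    simp only [Li, coeff_mk, liCoeff, Nat.succ_ne_zero, if_false]
    ring

theorem Li_mem_adjoin (s : List ℕ) : Li s ∈ ℚ[X, (1 - X)⁻¹ : ℚ⟦X⟧] := by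
  induction s with
  | nil => simp [Li_nil]
  | cons a t ih =>
    induction a with
    | zero =>
      rw [Li_zero_cons]
      exact mul_mem (mul_mem X_mem_adjoin_X_inv_one_sub_X
        inv_one_sub_X_mem_adjoin_X_inv_one_sub_X) ih
    | succ a iha =>
      rw [Li_succ_cons]
      exact mul_mem X_mem_adjoin_X_inv_one_sub_X (derivative_mem_adjoin_X_inv_one_sub_X iha)

/-- Any nonempty-index non-positive MPL lies in `(z/(1-z))·ℚ[z, 1/(1-z)]`,
where `1/(1-z)` is the inverse of `1 - X` in `ℚ⟦X⟧`. -/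
theorem Li_mem_rational (s : List ℕ) (hs : s ≠ []) :
    ∃ g ∈ Algebra.adjoin ℚ
        ({PowerSeries.X, (1 - PowerSeries.X)⁻¹} : Set (PowerSeries ℚ)),
      Li s = PowerSeries.X * (1 - PowerSeries.X)⁻¹ * g := by
  obtain ⟨a, t, rfl⟩ := List.exists_cons_of_ne_nil hs
  clear hs
  induction a with
  | zero => exact ⟨Li t, Li_mem_adjoin t, Li_zero_cons t⟩
  | succ a ih =>
    obtain ⟨g, hg, hLi⟩ := ih
    rw [Li_succ_cons, hLi]
    exact exists_X_mul_derivative_eq hg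
end

section
/- For nonnegative integers s₁, s₂, …, s_r with r > 1, the non-positive MPL satisfies the expansion Li⁻_{(s₁,…,s_r)} = ∑_{k₁=0}^{s₁} C(s₁,k₁) · Li⁻_{k₁} · Li⁻_{(s₁+s₂−k₁, s₃, …, s_r)}, where Li⁻_k denotes the depth-one function ∑_{n>0} n^k z^n. -/
open PowerSeries Finset

/- On coefficients, a pair `(a, b)` with `a + b = n`, `a, b > 0` contributes
`∑ₖ C(s₁,k) a^k b^{s₁+s₂-k} = (a + b)^{s₁} b^{s₂} = n^{s₁} b^{s₂}` to the right-hand side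
by the binomial theorem, and summing over `b < n` gives the coefficient
`n^{s₁} ∑_{b<n} b^{s₂} ∑_{n₃<b} ⋯` of `Li⁻_{(s₁,s₂,…)}`. -/

theorem Finset.Nat.sum_antidiagonal_ite_fst_eq_zero {M : Type*} [AddCommMonoid M]
    (f : ℕ → M) (n : ℕ) :
    ∑ p ∈ antidiagonal n, (if p.1 = 0 then 0 else f p.2) = ∑ m ∈ range n, f m := by
  cases n with
  | zero => simp
  | succ n =>
    rw [Finset.Nat.sum_antidiagonal_succ, ← Finset.Nat.sum_antidiagonal_swap]
    simp [Finset.Nat.sum_antidiagonal_eq_sum_range_succ_mk]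

lemma liCoeff_cons (s : ℕ) (t : List ℕ) (n : ℕ) :
    liCoeff (s :: t) n = (n : ℚ) ^ s * ∑ m ∈ range n, liCoeff t m := by
  cases n <;> simp [liCoeff]

lemma liCoeff_singleton (k n : ℕ) : liCoeff [k] n = if n = 0 then 0 else (n : ℚ) ^ k := by
  cases n <;> simp [liCoeff, Finset.sum_ite_eq']

lemma sum_choose_mul_liCoeff (s₁ s₂ : ℕ) (t : List ℕ) (a b : ℕ) :
    ∑ k ∈ range (s₁ + 1),
        (s₁.choose k : ℚ) * (liCoeff [k] a * liCoeff ((s₁ + s₂ - k) :: t) b) =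
      if a = 0 then 0 else ((a + b : ℕ) : ℚ) ^ s₁ * liCoeff (s₂ :: t) b := by
  rcases eq_or_ne a 0 with rfl | ha
  · simp [liCoeff_singleton]
  rcases eq_or_ne b 0 with rfl | hb
  · simp [liCoeff_cons]
  simp only [liCoeff_singleton, if_neg ha]
  simp only [liCoeff_cons, Nat.cast_add, add_pow, sum_mul]
  refine sum_congr rfl fun k hk => ?_
  rw [show s₁ + s₂ - k = (s₁ - k) + s₂ by grind, pow_add]
  ring

theorem Li_cons_expansion (s₁ s₂ : ℕ) (t : List ℕ) :
    Li (s₁ :: s₂ :: t) =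
      ∑ k ∈ Finset.range (s₁ + 1),
        ((s₁.choose k : ℚ)) • (Li [k] * Li ((s₁ + s₂ - k) :: t)) := by
  ext n
  simp only [Li, coeff_mk, map_sum, coeff_smul, coeff_mul, smul_eq_mul, mul_sum]
  rw [sum_comm]
  calc liCoeff (s₁ :: s₂ :: t) n
      = ∑ p ∈ antidiagonal n, if p.1 = 0 then 0 else (n : ℚ) ^ s₁ * liCoeff (s₂ :: t) p.2 := by
        rw [Finset.Nat.sum_antidiagonal_ite_fst_eq_zero (fun m ↦ _ * liCoeff (s₂ :: t) m),
          liCoeff_cons, mul_sum]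
    _ = _ := sum_congr rfl fun p hp => by
        rw [sum_choose_mul_liCoeff, mem_antidiagonal.mp hp]
end

section
/- For r > 1 and nonnegative integers s₁,…,s_r, one has Li⁻_{(s₁,…,s_r)} = ∑_{k₁=0}^{s₁} ∑_{k₂=0}^{s₁+s₂−k₁} ⋯ ∑_{k_{r−1}=0}^{s₁+⋯+s_{r−1}−k₁−⋯−k_{r−2}} C(s₁,k₁)·C(s₁+s₂−k₁, k₂)⋯C(s₁+⋯+s_{r−1}−k₁−⋯−k_{r−2}, k_{r−1}) · Li⁻_{k₁}·Li⁻_{k₂}⋯Li⁻_{k_{r−1}}·Li⁻_{s₁+⋯+s_r−k₁−⋯−k_{r−1}}, i.e. any non-positive MPL is a ℤ-linear combination of products of depth-one non-positive polylogarithms with multiple binomial coefficients. -/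
open PowerSeries Finset

/-- Extension of a finite tuple to a function on `ℕ` (by `0`). -/
def ext {m : ℕ} (k : Fin m → ℕ) : ℕ → ℕ := fun i => if h : i < m then k ⟨i, h⟩ else 0

/-- The nested upper bound `s₁+⋯+s_{i+1} − (k₁+⋯+k_i)` (0-indexed `i`). -/
def arrBound {r : ℕ} (s : Fin r → ℕ) {m : ℕ} (k : Fin m → ℕ) (i : ℕ) : ℕ :=
  (∑ j ∈ Finset.range (i + 1), ext s j) - ∑ j ∈ Finset.range i, ext k j

lemma liCoeff_cons_add (d b : ℕ) (t : List ℕ) (j : ℕ) :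
    liCoeff ((d + b) :: t) j = (j : ℚ) ^ d * liCoeff (b :: t) j := by
  by_cases hj : j = 0 <;> simp [liCoeff, hj, pow_add, mul_assoc]

lemma coeff_Li_singleton_mul (k n : ℕ) (f : ℚ⟦X⟧) :
    coeff n (Li [k] * f) = ∑ j ∈ range n, ((n - j : ℕ) : ℚ) ^ k * coeff j f := by
  rw [coeff_mul, ← Nat.sum_antidiagonal_swap]
  simp only [Prod.fst_swap, Prod.snd_swap]
  rw [Nat.sum_antidiagonal_eq_sum_range_succ (fun j i => coeff i (Li [k]) * coeff j f),
    sum_range_succ]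
  simp only [Li, coeff_mk, liCoeff_singleton, Nat.sub_self, if_true, zero_mul, add_zero]
  refine sum_congr rfl fun j hj => ?_
  rw [if_neg (Nat.sub_ne_zero_of_lt (mem_range.1 hj))]

theorem Li_cons_cons (a b : ℕ) (t : List ℕ) :
    Li (a :: b :: t) =
      ∑ k ∈ range (a + 1), (a.choose k : ℚ) • (Li [k] * Li ((a + b - k) :: t)) := by
  ext n
  simp only [map_sum, coeff_smul, coeff_Li_singleton_mul, smul_eq_mul, mul_sum]
  rw [sum_comm]
  have binomial : ∀ j ∈ range n, ∑ k ∈ range (a + 1),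
      (a.choose k : ℚ) * (((n - j : ℕ) : ℚ) ^ k * coeff j (Li ((a + b - k) :: t))) =
      (n : ℚ) ^ a * liCoeff (b :: t) j := by
    intro j hj
    have hjn : ((n - j : ℕ) : ℚ) + j = n := by
      rw [← Nat.cast_add, Nat.sub_add_cancel (mem_range.1 hj).le]
    rw [← hjn, add_pow, sum_mul]
    refine sum_congr rfl fun k hk => ?_
    rw [Li, coeff_mk, show a + b - k = (a - k) + b by have := mem_range.1 hk; omega,
      liCoeff_cons_add]
    ring
  rw [sum_congr rfl binomial, ← mul_sum, Li, coeff_mk]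
  by_cases hn : n = 0 <;> simp [liCoeff, hn]

section Expansion

variable {m : ℕ}

lemma ext_zero (k : Fin (m + 1) → ℕ) : ext k 0 = k 0 := by
  simp [_root_.ext]

lemma ext_succ (k : Fin (m + 1) → ℕ) (j : ℕ) : ext k (j + 1) = ext (Fin.tail k) j := by
  by_cases hj : j < m
  · simp [_root_.ext, hj, Fin.tail, ← Fin.succ_mk]
  · simp [_root_.ext, hj]

lemma sum_range_succ_ext (k : Fin (m + 1) → ℕ) (i : ℕ) :
    ∑ j ∈ range (i + 1), ext k j = k 0 + ∑ j ∈ range i, ext (Fin.tail k) j := by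
  simp [sum_range_succ', ext_zero, ext_succ, add_comm]

lemma sum_range_ext_le (k : Fin m → ℕ) (i : ℕ) : ∑ j ∈ range i, ext k j ≤ ∑ j, k j := by
  calc ∑ j ∈ range i, ext k j ≤ ∑ j ∈ range m, ext k j := by
        rcases le_total i m with h | h
        · exact sum_le_sum_of_subset (range_subset_range.2 h)
        · refine (sum_subset (range_subset_range.2 h) fun j _ hj => ?_).ge
          simp [_root_.ext, not_lt.1 (mt mem_range.2 hj)]
    _ = ∑ j, k j := by
        rw [← Fin.sum_univ_eq_sum_range]
        simp [_root_.ext]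

lemma arrBound_le {r : ℕ} (s : Fin r → ℕ) (k : Fin m → ℕ) (i : ℕ) :
    arrBound s k i ≤ ∑ j, s j :=
  (Nat.sub_le _ _).trans (sum_range_ext_le s _)

lemma arrBound_zero {r : ℕ} (s : Fin (r + 1) → ℕ) (k : Fin m → ℕ) : arrBound s k 0 = s 0 := by
  simp [arrBound, _root_.ext]

def mergeHead (s : Fin (m + 2) → ℕ) (k₀ : ℕ) : Fin (m + 1) → ℕ :=
  Fin.cons (s 0 + s 1 - k₀) (Fin.tail (Fin.tail s))

lemma sum_mergeHead (s : Fin (m + 2) → ℕ) {k₀ : ℕ} (h : k₀ ≤ s 0) :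
    ∑ i, mergeHead s k₀ i = ∑ i, s i - k₀ := by
  simp only [mergeHead, Fin.sum_univ_succ (n := m), Fin.sum_univ_succ (n := m + 1),
    Fin.cons_zero, Fin.cons_succ, Fin.succ_zero_eq_one, Fin.tail]
  omega

lemma arrBound_cons_succ (s : Fin (m + 2) → ℕ) {k₀ : ℕ} (h : k₀ ≤ s 0) {n : ℕ}
    (k : Fin n → ℕ) (i : ℕ) :
    arrBound s (Fin.cons k₀ k : Fin (n + 1) → ℕ) (i + 1) = arrBound (mergeHead s k₀) k i := by
  simp only [arrBound, sum_range_succ_ext, mergeHead, Fin.tail_cons, Fin.cons_zero]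
  simp only [Fin.tail, Fin.succ_zero_eq_one]
  omega

def expansionIndices (s : Fin (m + 1) → ℕ) : Finset (Fin m → ℕ) :=
  (Fintype.piFinset fun _ : Fin m => range ((∑ i, s i) + 1)).filter
    fun k => ∀ i : Fin m, k i ≤ arrBound s k i

noncomputable def expansionTerm (s : Fin (m + 1) → ℕ) (k : Fin m → ℕ) : ℚ⟦X⟧ :=
  (∏ i ∈ range m, ((arrBound s k i).choose (ext k i) : ℚ)) •
    ((∏ i ∈ range m, Li [ext k i]) * Li [(∑ i, s i) - ∑ i ∈ range m, ext k i])

lemma mem_expansionIndices {s : Fin (m + 1) → ℕ} {k : Fin m → ℕ} :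
    k ∈ expansionIndices s ↔ ∀ i : Fin m, k i ≤ arrBound s k i := by
  simp only [expansionIndices, mem_filter, Fintype.mem_piFinset, mem_range, and_iff_right_iff_imp]
  exact fun h i => Nat.lt_succ_of_le ((h i).trans (arrBound_le s k i))

lemma cons_mem_expansionIndices {s : Fin (m + 2) → ℕ} {k₀ : ℕ} {k : Fin m → ℕ} :
    (Fin.cons k₀ k : Fin (m + 1) → ℕ) ∈ expansionIndices s ↔
      k₀ ≤ s 0 ∧ k ∈ expansionIndices (mergeHead s k₀) := by
  simp only [mem_expansionIndices, Fin.forall_fin_succ, Fin.cons_zero, Fin.cons_succ,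
    Fin.val_zero, Fin.val_succ, arrBound_zero]
  exact and_congr_right fun h => by simp only [arrBound_cons_succ s h]

lemma expansionTerm_cons (s : Fin (m + 2) → ℕ) {k₀ : ℕ} (h : k₀ ≤ s 0) (k : Fin m → ℕ) :
    expansionTerm s (Fin.cons k₀ k : Fin (m + 1) → ℕ) =
      ((s 0).choose k₀ : ℚ) • (Li [k₀] * expansionTerm (mergeHead s k₀) k) := by
  simp only [expansionTerm, prod_range_succ', sum_range_succ', ext_succ, Fin.tail_cons,
    ext_zero, Fin.cons_zero, arrBound_zero, arrBound_cons_succ s h, sum_mergeHead s h,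
    Nat.sub_sub, add_comm k₀]
  rw [mul_smul_comm, smul_smul, mul_comm ((s 0).choose k₀ : ℚ)]
  congr 1
  ring

lemma sum_expansionIndices {M : Type*} [AddCommMonoid M] (s : Fin (m + 2) → ℕ)
    (f : (Fin (m + 1) → ℕ) → M) :
    ∑ k ∈ expansionIndices s, f k =
      ∑ k₀ ∈ range (s 0 + 1), ∑ k ∈ expansionIndices (mergeHead s k₀), f (Fin.cons k₀ k) := by
  rw [sum_sigma']
  refine sum_nbij' (fun k => ⟨k 0, Fin.tail k⟩) (fun p => Fin.cons p.1 p.2) ?_ ?_ ?_ ?_ ?_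
  · intro k hk
    rw [← Fin.cons_self_tail k, cons_mem_expansionIndices] at hk
    simpa [Nat.lt_succ_iff] using hk
  · rintro ⟨k₀, k⟩ h
    simp only [mem_sigma, mem_range, Nat.lt_succ_iff] at h
    exact cons_mem_expansionIndices.2 h
  · simp
  · simp
  · simp

theorem Li_ofFn_eq_sum_expansionTerm (s : Fin (m + 1) → ℕ) :
    Li (List.ofFn s) = ∑ k ∈ expansionIndices s, expansionTerm s k := by
  induction m with
  | zero => simp [expansionIndices, expansionTerm]
  | succ m ih =>
    calc Li (List.ofFn s)
        = ∑ k₀ ∈ range (s 0 + 1),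
            ((s 0).choose k₀ : ℚ) • (Li [k₀] * Li (List.ofFn (mergeHead s k₀))) := by
          simp only [mergeHead, List.ofFn_succ, Fin.cons_zero, Fin.cons_succ, Fin.tail,
            Fin.succ_zero_eq_one, Li_cons_cons]
      _ = ∑ k₀ ∈ range (s 0 + 1), ∑ k ∈ expansionIndices (mergeHead s k₀),
            expansionTerm s (Fin.cons k₀ k) := by
          refine sum_congr rfl fun k₀ hk₀ => ?_
          rw [ih, mul_sum, smul_sum]
          exact sum_congr rfl fun k _ =>
            (expansionTerm_cons s (Nat.lt_succ_iff.1 (mem_range.1 hk₀)) k).symm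
      _ = ∑ k ∈ expansionIndices s, expansionTerm s k := (sum_expansionIndices s _).symm

end Expansion

theorem Li_full_expansion (r : ℕ) (hr : 1 < r) (s : Fin r → ℕ) :
    Li (List.ofFn s) =
      ∑ k ∈ (Fintype.piFinset fun _ : Fin (r - 1) =>
            Finset.range ((∑ i, s i) + 1)).filter
          (fun k => ∀ i : Fin (r - 1), k i ≤ arrBound s k (i : ℕ)),
        (∏ i ∈ Finset.range (r - 1), ((arrBound s k i).choose (ext k i) : ℚ)) •
          ((∏ i ∈ Finset.range (r - 1), Li [ext k i]) *
            Li [(∑ i, s i) - ∑ i ∈ Finset.range (r - 1), ext k i]) := by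
  obtain ⟨m, rfl⟩ : ∃ m, r = m + 1 := ⟨r - 1, by omega⟩
  exact Li_ofFn_eq_sum_expansionTerm s
end

section
/- For all nonnegative integers n and r, Li⁻_{(0,0,…,0,r)} with n leading zeros equals (Li⁻_0)^n · Li⁻_r, i.e. ∑_{n₁>⋯>n_{n+1}>0} n_{n+1}^r z^{n₁} = (z/(1-z))^n · ∑_{m>0} m^r z^m as formal power series. -/
open PowerSeries Finset

/-!
Multiplying a power series by `Li⁻_0 = z/(1-z) = z · ∑ zⁱ` replaces its `n`-th coefficient
by the sum of the coefficients of index `< n`. This is exactly the recursion defining the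
coefficients of `Li⁻_{(0,s)}` from those of `Li⁻_s`, so `Li⁻_{(0,s)} = Li⁻_0 · Li⁻_s`;
iterate `n` times.
-/

namespace PowerSeries

variable {R : Type*} [Semiring R]

theorem coeff_mk_one_mul (f : R⟦X⟧) (n : ℕ) :
    coeff n (mk 1 * f) = ∑ i ∈ range (n + 1), coeff i f := by
  rw [coeff_mul, Nat.sum_antidiagonal_eq_sum_range_succ (fun i j => coeff i (mk 1) * coeff j f)]
  simp only [coeff_mk, Pi.one_apply, one_mul]
  exact sum_range_reflect (fun i => coeff i f) (n + 1)

theorem coeff_X_mul_mk_one_mul (f : R⟦X⟧) (n : ℕ) :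
    coeff n (X * mk 1 * f) = ∑ i ∈ range n, coeff i f := by
  cases n with
  | zero => simp [mul_assoc]
  | succ n => rw [mul_assoc, coeff_succ_X_mul, coeff_mk_one_mul]

end PowerSeries

theorem Li_singleton_zero : Li [0] = X * PowerSeries.mk 1 := by
  ext n
  cases n <;> simp [Li, liCoeff]

theorem Li_zero_cons_s8 (s : List ℕ) : Li (0 :: s) = Li [0] * Li s := by
  ext n
  rw [Li_singleton_zero, coeff_X_mul_mk_one_mul]
  cases n <;> simp [Li, liCoeff]

theorem Li_zeros_cons (n r : ℕ) :
    Li (List.replicate n 0 ++ [r]) = (Li [0]) ^ n * Li [r] := by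
  induction n with
  | zero => simp
  | succ n ih => rw [List.replicate_succ, List.cons_append, Li_zero_cons_s8, ih, pow_succ', mul_assoc]
end

section
/- For all nonnegative integers m and n, Li⁻_m · Li⁻_n = ∑_{k=0}^{m} (−1)^k C(m,k) Li⁻_{(m−k, n+k)} = ∑_{k=0}^{n} (−1)^k C(n,k) Li⁻_{(n−k, m+k)}, where Li⁻_m := ∑_{j>0} j^m z^j and Li⁻_{(a,b)} := ∑_{j₁>j₂>0} j₁^a j₂^b z^{j₁}. -/
open PowerSeries Finset

lemma liCoeff_single (m a : ℕ) : liCoeff [m] a = if a = 0 then 0 else (a : ℚ) ^ m := by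
  rcases Nat.eq_zero_or_pos a with h | h
  · simp [h, liCoeff]
  · have ha : a ≠ 0 := h.ne'
    simp only [liCoeff, ha, if_false]
    rw [Finset.sum_ite_eq' (Finset.range a) 0 (fun _ => (1 : ℚ))]
    simp [Finset.mem_range, h]

lemma liCoeff_pair (a b N : ℕ) :
    liCoeff [a, b] N =
      if N = 0 then 0 else
        (N : ℚ) ^ a * ∑ j ∈ Finset.range N, (if j = 0 then 0 else (j : ℚ) ^ b) := by
  simp only [liCoeff]
  split
  · rfl
  · congr 1
    refine Finset.sum_congr rfl fun j _ => ?_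
    exact liCoeff_single b j

lemma binom_sub (x y : ℚ) (m : ℕ) :
    (x - y) ^ m =
      ∑ k ∈ Finset.range (m + 1), (-1 : ℚ) ^ k * (m.choose k : ℚ) * x ^ (m - k) * y ^ k := by
  rw [sub_pow, ← Finset.sum_range_reflect]
  refine Finset.sum_congr rfl fun k hk => ?_
  rw [Finset.mem_range] at hk
  have hk' : k ≤ m := Nat.lt_succ_iff.mp hk
  have h1 : m + 1 - 1 - k = m - k := by omega
  have h2 : m - (m - k) = k := by omega
  have h3 : m - k + m = k + 2 * (m - k) := by omega
  rw [h1, h2, h3, Nat.choose_symm hk', pow_add, pow_mul]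
  ring

lemma reflect_sum (m n N : ℕ) :
    ∑ i ∈ Finset.range (N + 1),
        (if i = 0 then (0 : ℚ) else (i : ℚ) ^ m) *
          (if N - i = 0 then (0 : ℚ) else ((N - i : ℕ) : ℚ) ^ n)
      = ∑ j ∈ Finset.range N, (if j = 0 then (0 : ℚ) else ((N : ℚ) - (j : ℚ)) ^ m * (j : ℚ) ^ n) := by
  rw [Finset.sum_range_succ, Nat.sub_self, if_pos rfl, mul_zero, add_zero]
  have h1 : ∑ i ∈ Finset.range N,
      (if i = 0 then (0 : ℚ) else (i : ℚ) ^ m) *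
        (if N - i = 0 then (0 : ℚ) else ((N - i : ℕ) : ℚ) ^ n)
      = ∑ i ∈ Finset.Ico 1 N,
      (if i = 0 then (0 : ℚ) else (i : ℚ) ^ m) *
        (if N - i = 0 then (0 : ℚ) else ((N - i : ℕ) : ℚ) ^ n) := by
    refine (Finset.sum_subset ?_ ?_).symm
    · intro x hx; rw [Finset.mem_Ico] at hx; rw [Finset.mem_range]; omega
    · intro x hx hx'
      rw [Finset.mem_range] at hx
      rw [Finset.mem_Ico] at hx'
      have : x = 0 := by omega
      simp [this]
  have h2 : ∑ j ∈ Finset.range N,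
      (if j = 0 then (0 : ℚ) else ((N : ℚ) - (j : ℚ)) ^ m * (j : ℚ) ^ n)
      = ∑ j ∈ Finset.Ico 1 N,
      (if j = 0 then (0 : ℚ) else ((N : ℚ) - (j : ℚ)) ^ m * (j : ℚ) ^ n) := by
    refine (Finset.sum_subset ?_ ?_).symm
    · intro x hx; rw [Finset.mem_Ico] at hx; rw [Finset.mem_range]; omega
    · intro x hx hx'
      rw [Finset.mem_range] at hx
      rw [Finset.mem_Ico] at hx'
      have : x = 0 := by omega
      simp [this]
  rw [h1, h2]
  apply Finset.sum_nbij' (i := fun i => N - i) (j := fun j => N - j)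
  · intro i hi; rw [Finset.mem_Ico] at hi ⊢; omega
  · intro j hj; rw [Finset.mem_Ico] at hj ⊢; omega
  · intro i hi; rw [Finset.mem_Ico] at hi; omega
  · intro j hj; rw [Finset.mem_Ico] at hj; omega
  · intro i hi
    rw [Finset.mem_Ico] at hi
    have h1' : i ≠ 0 := by omega
    have h2' : N - i ≠ 0 := by omega
    rw [if_neg h1', if_neg h2', if_neg h2']
    have hc2 : (((N - i : ℕ)) : ℚ) = (N : ℚ) - (i : ℚ) := by
      exact_mod_cast Nat.cast_sub (le_of_lt hi.2)
    rw [hc2]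
    ring

lemma Li_mul_one_side (m n : ℕ) :
    Li [m] * Li [n] =
      ∑ k ∈ Finset.range (m + 1),
        ((-1 : ℚ) ^ k * (m.choose k : ℚ)) • Li [m - k, n + k] := by
  ext N
  rw [PowerSeries.coeff_mul, map_sum]
  simp only [PowerSeries.coeff_smul, Li, PowerSeries.coeff_mk, liCoeff_single, liCoeff_pair,
    smul_eq_mul]
  rcases Nat.eq_zero_or_pos N with hN | hN
  · subst hN
    simp
  · have hN' : N ≠ 0 := hN.ne'
    rw [Finset.Nat.sum_antidiagonal_eq_sum_range_succ_mk]
    simp only [hN', if_false]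
    rw [reflect_sum m n N]
    simp_rw [Finset.mul_sum]
    rw [Finset.sum_comm]
    refine Finset.sum_congr rfl fun j hj => ?_
    rw [Finset.mem_range] at hj
    rcases Nat.eq_zero_or_pos j with h0 | h0
    · simp [h0]
    · have h1 : j ≠ 0 := h0.ne'
      rw [if_neg h1]
      have : ∀ k ∈ Finset.range (m + 1),
          (-1 : ℚ) ^ k * (m.choose k : ℚ) * ((N : ℚ) ^ (m - k) * (if j = 0 then (0:ℚ) else (j : ℚ) ^ (n + k)))
            = ((-1 : ℚ) ^ k * (m.choose k : ℚ) * (N:ℚ) ^ (m - k) * (j : ℚ) ^ k) * (j : ℚ) ^ n := by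
        intro k _
        rw [if_neg h1, pow_add]
        ring
      rw [Finset.sum_congr rfl this, ← Finset.sum_mul, ← binom_sub]

theorem Li_mono_mul_mono (m n : ℕ) :
    Li [m] * Li [n] =
      (∑ k ∈ Finset.range (m + 1),
        ((-1 : ℚ) ^ k * (m.choose k : ℚ)) • Li [m - k, n + k]) ∧
    Li [m] * Li [n] =
      (∑ k ∈ Finset.range (n + 1),
        ((-1 : ℚ) ^ k * (n.choose k : ℚ)) • Li [n - k, m + k]) := by
  refine ⟨Li_mul_one_side m n, ?_⟩
  rw [mul_comm]
  exact Li_mul_one_side n m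
end

section
/- For n > 1 and nonnegative integers s₁,…,s_n, the n-fold Cauchy product ∏_{i=1}^n Li⁻_{s_i} equals ∑_{k₁=0}^{s₁} ∑_{k₂=0}^{s₂} ⋯ ∑_{k_{n−1}=0}^{s_{n−1}} (∏_{i=1}^{n−1} (−1)^{k_i} C(s_i,k_i)) · Li⁻_{(s₁−k₁, s₂−k₂+k₁, …, s_{n−1}−k_{n−1}+k_{n−2}, s_n+k_{n−1})}. -/
open PowerSeries Finset

/-!
The coefficient of `z^n` in `Li (s :: t)` is `n^s` times the `n`-th partial sum of `Li t`, so
`Li (s :: t) = T_s (Li t)` for a linear operator `T_s`. The coefficient of `z^n` in `Li [a] * T_b g`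
is `∑_{j<n} (n-j)^a j^b ∑_{m<j} g_m`, and expanding `(n-j)^a` binomially gives
`Li [a] * T_b g = ∑_k (-1)^k C(a,k) T_{a-k} (T_{b+k} g)`. Induction on the number of factors,
peeling off the first one, turns this into the formula, in which each summation index `k_i` is
moved from the `i`-th entry of the index list to the next.
-/

noncomputable def liOp (s : ℕ) : ℚ⟦X⟧ →ₗ[ℚ] ℚ⟦X⟧ where
  toFun g := mk fun n => (n : ℚ) ^ s * ∑ m ∈ range n, coeff m g
  map_add' f g := by ext n; simp [mul_add, sum_add_distrib]
  map_smul' c g := by ext n; simp [mul_sum, mul_left_comm]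

theorem coeff_liOp (s n : ℕ) (g : ℚ⟦X⟧) :
    coeff n (liOp s g) = (n : ℚ) ^ s * ∑ m ∈ range n, coeff m g := by
  simp [liOp]

theorem Li_cons (s : ℕ) (t : List ℕ) : Li (s :: t) = liOp s (Li t) := by
  ext n
  rcases eq_or_ne n 0 with rfl | hn
  · simp [Li, liCoeff, coeff_liOp]
  · simp [Li, liCoeff, coeff_liOp, hn]

theorem coeff_Li_singleton {i : ℕ} (a : ℕ) (hi : i ≠ 0) : coeff i (Li [a]) = (i : ℚ) ^ a := by
  simp [Li, liCoeff, hi, Nat.pos_of_ne_zero hi]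

theorem Li_singleton_mul_liOp (a b : ℕ) (g : ℚ⟦X⟧) :
    Li [a] * liOp b g = ∑ k ∈ range (a + 1),
      ((-1 : ℚ) ^ k * a.choose k) • liOp (a - k) (liOp (b + k) g) := by
  ext n
  rcases eq_or_ne n 0 with rfl | hn
  · simp [coeff_mul, coeff_liOp, -coeff_zero_eq_constantCoeff]
  calc coeff n (Li [a] * liOp b g)
      = ∑ j ∈ range n, ((n : ℚ) - j) ^ a * ((j : ℚ) ^ b * ∑ m ∈ range j, coeff m g) := by
        rw [coeff_mul, ← Nat.sum_antidiagonal_swap]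
        simp only [Prod.fst_swap, Prod.snd_swap]
        rw [Nat.sum_antidiagonal_eq_sum_range_succ
          (fun j i => coeff i (Li [a]) * coeff j (liOp b g)), sum_range_succ, Nat.sub_self]
        have hLi0 : coeff 0 (Li [a]) = 0 := by simp [Li, liCoeff]
        rw [hLi0, zero_mul, add_zero]
        refine sum_congr rfl fun j hj => ?_
        have hjn : j < n := mem_range.mp hj
        rw [coeff_Li_singleton a (Nat.sub_ne_zero_of_lt hjn), Nat.cast_sub hjn.le, coeff_liOp]
    _ = ∑ j ∈ range n, ∑ k ∈ range (a + 1), ((-1 : ℚ) ^ k * a.choose k) *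
          ((n : ℚ) ^ (a - k) * ((j : ℚ) ^ (b + k) * ∑ m ∈ range j, coeff m g)) := by
        refine sum_congr rfl fun j _ => ?_
        rw [sub_eq_neg_add, add_pow, sum_mul]
        refine sum_congr rfl fun k _ => ?_
        rw [neg_pow, pow_add]
        ring
    _ = coeff n (∑ k ∈ range (a + 1),
          ((-1 : ℚ) ^ k * a.choose k) • liOp (a - k) (liOp (b + k) g)) := by
        rw [sum_comm]
        simp [coeff_liOp, mul_sum]

theorem Li_singleton_mul_Li_cons (a b : ℕ) (t : List ℕ) :
    Li [a] * Li (b :: t) = ∑ k ∈ range (a + 1),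
      ((-1 : ℚ) ^ k * a.choose k) • Li ((a - k) :: (b + k) :: t) := by
  rw [Li_cons b, Li_singleton_mul_liOp]
  simp only [Li_cons]

theorem sum_piFinset_fin_succ {β : Type*} [AddCommMonoid β] {m : ℕ} {α : Fin (m + 1) → Type*}
    (S : ∀ i, Finset (α i)) (F : (∀ i, α i) → β) :
    ∑ k ∈ Fintype.piFinset S, F k =
      ∑ k₀ ∈ S 0, ∑ k ∈ Fintype.piFinset (Fin.tail S), F (Fin.cons k₀ k) := by
  have h := filter_piFinset_eq_map_consEquiv S fun _ => True
  simp only [filter_true] at h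
  rw [h, sum_map, sum_product]
  rfl

@[simp]
theorem ext_val {m : ℕ} (k : Fin m → ℕ) (i : Fin m) : ext k i = k i := by
  simp [_root_.ext]

theorem ext_eq_zero_of_le {m i : ℕ} (k : Fin m → ℕ) (hi : m ≤ i) : ext k i = 0 := by
  simp [_root_.ext, Nat.not_lt.mpr hi]

@[simp]
theorem ext_cons_zero {m : ℕ} (k₀ : ℕ) (k : Fin m → ℕ) :
    ext (Fin.cons k₀ k : Fin (m + 1) → ℕ) 0 = k₀ := by
  simp [_root_.ext]

@[simp]
theorem ext_cons_succ {m : ℕ} (k₀ : ℕ) (k : Fin m → ℕ) (i : ℕ) :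
    ext (Fin.cons k₀ k : Fin (m + 1) → ℕ) (i + 1) = ext k i := by
  by_cases hi : i < m
  · simpa [_root_.ext, hi] using Fin.cons_succ (α := fun _ => ℕ) k₀ k ⟨i, hi⟩
  · simp [_root_.ext, hi]

theorem prod_Li_singleton_eq_sum (m : ℕ) (s : ℕ → ℕ) :
    ∏ i ∈ range (m + 1), Li [s i] =
      ∑ k ∈ Fintype.piFinset (fun i : Fin m => range (s i + 1)),
        (∏ i : Fin m, (-1 : ℚ) ^ k i * (s i).choose (k i)) •
          Li (List.ofFn fun j : Fin (m + 1) =>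
            s j - ext k j + if (j : ℕ) = 0 then 0 else ext k (j - 1)) := by
  induction m generalizing s with
  | zero => simp [ext_eq_zero_of_le]
  | succ m ih =>
    rw [prod_range_succ', ih (fun i => s (i + 1)), mul_comm, mul_sum, sum_piFinset_fin_succ,
      sum_comm]
    refine sum_congr rfl fun k _ => ?_
    rw [List.ofFn_succ, mul_smul_comm, Li_singleton_mul_Li_cons, smul_sum]
    refine sum_congr rfl fun k₀ _ => ?_
    rw [smul_smul, Fin.prod_univ_succ, mul_comm]
    simp only [Fin.cons_zero, Fin.cons_succ, Fin.val_succ, Fin.val_zero]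
    congr 2
    conv_rhs => rw [List.ofFn_succ, List.ofFn_succ]
    simp

theorem Li_n_fold_product (n : ℕ) (hn : 1 < n) (s : Fin n → ℕ) :
    (∏ i : Fin n, Li [s i]) =
      ∑ k ∈ Fintype.piFinset (fun i : Fin (n - 1) => Finset.range (ext s i + 1)),
        (∏ i ∈ Finset.range (n - 1),
            (-1 : ℚ) ^ (ext k i) * ((ext s i).choose (ext k i) : ℚ)) •
          Li (List.ofFn fun j : Fin n =>
            if (j : ℕ) < n - 1 then
              s j - ext k j + (if (j : ℕ) = 0 then 0 else ext k ((j : ℕ) - 1))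
            else s j + ext k (n - 2)) := by
  obtain ⟨m, rfl⟩ : ∃ m, n = m + 2 := ⟨n - 2, by omega⟩
  have hprod : ∏ i : Fin (m + 2), Li [s i] = ∏ i ∈ range (m + 2), Li [ext s i] := by
    simpa using Fin.prod_univ_eq_prod_range (fun i => Li [ext s i]) (m + 2)
  rw [hprod, prod_Li_singleton_eq_sum (m + 1) (ext s)]
  refine sum_congr rfl fun k _ => ?_
  congr 1
  · simpa using Fin.prod_univ_eq_prod_range
      (fun i => (-1 : ℚ) ^ ext k i * ((ext s i).choose (ext k i) : ℚ)) (m + 1)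
  · refine congrArg Li (congrArg List.ofFn (funext fun j => ?_))
    rw [ext_val s j]
    by_cases hj : (j : ℕ) < m + 1
    · simp [hj]
    · have hlast : (j : ℕ) = m + 1 := by omega
      simp [hlast, ext_eq_zero_of_le]
end

section
/- Define the ℚ-linear map Li⁻_• from the free ℚ-vector space on finite sequences of nonnegative integers to ℚ[[z]] sending (s₁,…,s_r) to Li⁻_{(s₁,…,s_r)}. For a multi-index k = (k₁,…,k_r; k_∞), write the Magnus polynomial M^{(k)}x₁ in the monomial basis x₀^{a₁}x₁⋯x₀^{a_{r+1}}x₁ of ℚ⟨x₀,x₁⟩x₁ and let π(M^{(k)}x₁) be the corresponding ℚ-linear combination of words y_{a₁}⋯y_{a_{r+1}} (i.e. of multi-indices (a₁,…,a_{r+1})). Then Li⁻_{k₁}·Li⁻_{k₂}⋯Li⁻_{k_r}·Li⁻_{k_∞} = Li⁻_{π(M^{(k)}x₁)}. -/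
/-! Write θ = z d/dz. On a word ending in x₁, prefixing x₁ multiplies its Li⁻ by
Li⁻₀ = z/(1-z), and prefixing x₀ applies θ, since both act on the leading index n₁ of the
iterated sum. By the Leibniz rule, x₁^{(m+1)} = x₀x₁^{(m)} - x₁^{(m)}x₀ therefore acts on words
ending in x₁ as multiplication by θ(Li⁻_m) = Li⁻_{m+1}. Peeling off the factors of the Magnus
polynomial one at a time leaves x₀^{k_∞}x₁, whose image is θ^{k_∞}(Li⁻₀) = Li⁻_{k_∞}. -/

open PowerSeries Finset

def lieX : ℕ → FreeAlgebra ℚ (Fin 2)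
  | 0 => FreeAlgebra.ι ℚ 1
  | m + 1 => FreeAlgebra.ι ℚ 0 * lieX m - lieX m * FreeAlgebra.ι ℚ 0

def magnus {r : ℕ} (k : Fin (r + 1) → ℕ) : FreeAlgebra ℚ (Fin 2) :=
  ((List.finRange r).map fun j => lieX (k j.castSucc)).prod *
    FreeAlgebra.ι ℚ 0 ^ (k (Fin.last r))

def decode : List (Fin 2) → List ℕ
  | [] => []
  | a :: t =>
      if a = 1 then 0 :: decode t
      else
        match decode t with
        | [] => []
        | b :: rest => (b + 1) :: rest

noncomputable def LiPi (a : FreeAlgebra ℚ (Fin 2)) : PowerSeries ℚ :=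
  (FreeAlgebra.equivMonoidAlgebraFreeMonoid a).coeff.sum
    fun w c => c • Li (decode (FreeMonoid.toList w))

namespace PowerSeries

variable (R : Type*) [CommSemiring R]

noncomputable def eulerDerivation : Derivation R (PowerSeries R) (PowerSeries R) :=
  (X : PowerSeries R) • derivative R

variable {R}

@[simp] theorem coeff_eulerDerivation (f : PowerSeries R) (n : ℕ) :
    coeff n (eulerDerivation R f) = n * coeff n f := by
  rcases n with _ | n
  · simp [eulerDerivation]
  · simp [eulerDerivation, coeff_derivative, mul_comm]

end PowerSeries

namespace FreeAlgebra

variable (R X : Type*) [CommSemiring R]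

theorem basisFreeMonoid_apply (w : FreeMonoid X) :
    basisFreeMonoid R X w = FreeMonoid.lift (ι R) w := by
  simp [basisFreeMonoid, equivMonoidAlgebraFreeMonoid]

end FreeAlgebra

open FreeAlgebra

theorem decode_cons_one (w : List (Fin 2)) : decode (1 :: w) = 0 :: decode w := rfl

theorem decode_cons_zero (w : List (Fin 2)) :
    decode (0 :: w) = (decode w).modifyHead (· + 1) := by
  simp only [decode, zero_ne_one, if_false]
  cases decode w <;> rfl

theorem decode_append_one_ne_nil (w : List (Fin 2)) : decode (w ++ [1]) ≠ [] := by
  induction w with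
  | nil => simp [decode]
  | cons a w ih =>
    fin_cases a
    · simpa [decode_cons_zero] using ih
    · simp [decode_cons_one]

theorem liCoeff_singleton_zero (m : ℕ) : liCoeff [0] m = if m = 0 then 0 else 1 := by
  rcases m with _ | m
  · rfl
  · simp [liCoeff]

theorem Li_singleton_zero_mul (s : List ℕ) : Li [0] * Li s = Li (0 :: s) := by
  ext n
  rw [mul_comm, coeff_mul, Finset.Nat.sum_antidiagonal_eq_sum_range_succ_mk, Finset.sum_range_succ]
  simp only [Li, coeff_mk, liCoeff_singleton_zero, Nat.sub_self]
  rcases n with _ | n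
  · simp [liCoeff]
  simp only [if_true, mul_zero, add_zero, liCoeff, Nat.add_one_ne_zero, if_false, pow_zero,
    one_mul]
  refine Finset.sum_congr rfl fun x hx => ?_
  rw [if_neg (by rw [Finset.mem_range] at hx; omega), mul_one]

theorem eulerDerivation_Li_cons (s : ℕ) (t : List ℕ) :
    eulerDerivation ℚ (Li (s :: t)) = Li ((s + 1) :: t) := by
  ext n
  rcases n with _ | n
  · simp [Li, liCoeff]
  · simp only [Li, coeff_mk, coeff_eulerDerivation, liCoeff, Nat.add_one_ne_zero, if_false,
      pow_succ]
    ring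

theorem eulerDerivation_Li {s : List ℕ} (hs : s ≠ []) :
    eulerDerivation ℚ (Li s) = Li (s.modifyHead (· + 1)) := by
  obtain ⟨a, t, rfl⟩ := List.exists_cons_of_ne_nil hs
  exact eulerDerivation_Li_cons a t

noncomputable def LiPiₗ : FreeAlgebra ℚ (Fin 2) →ₗ[ℚ] PowerSeries ℚ :=
  (basisFreeMonoid ℚ (Fin 2)).constr ℚ fun w => Li (decode w.toList)

theorem LiPiₗ_apply (a : FreeAlgebra ℚ (Fin 2)) : LiPiₗ a = LiPi a := by
  rw [LiPiₗ, Module.Basis.constr_apply]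
  rfl

theorem LiPi_lift_ι (w : FreeMonoid (Fin 2)) :
    LiPi (FreeMonoid.lift (ι ℚ) w) = Li (decode w.toList) := by
  rw [← LiPiₗ_apply, ← basisFreeMonoid_apply, LiPiₗ, Module.Basis.constr_basis]

theorem LiPi_ι_one_mul (a : FreeAlgebra ℚ (Fin 2)) : LiPi (ι ℚ 1 * a) = Li [0] * LiPi a := by
  have h : LiPiₗ ∘ₗ LinearMap.mulLeft ℚ (ι ℚ 1) = LinearMap.mulLeft ℚ (Li [0]) ∘ₗ LiPiₗ := by
    refine (basisFreeMonoid ℚ (Fin 2)).ext fun w => ?_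
    simp only [LinearMap.comp_apply, LinearMap.mulLeft_apply, LiPiₗ_apply, basisFreeMonoid_apply]
    rw [← FreeMonoid.lift_eval_of (ι ℚ) 1, ← map_mul, LiPi_lift_ι, LiPi_lift_ι]
    exact (Li_singleton_zero_mul _).symm
  simpa only [LinearMap.comp_apply, LinearMap.mulLeft_apply, LiPiₗ_apply] using
    LinearMap.congr_fun h a

theorem LiPi_ι_zero_mul_mul_ι_one (a : FreeAlgebra ℚ (Fin 2)) :
    LiPi (ι ℚ 0 * a * ι ℚ 1) = eulerDerivation ℚ (LiPi (a * ι ℚ 1)) := by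
  have h : LiPiₗ ∘ₗ LinearMap.mulRight ℚ (ι ℚ 1) ∘ₗ LinearMap.mulLeft ℚ (ι ℚ 0) =
      (eulerDerivation ℚ).toLinearMap ∘ₗ LiPiₗ ∘ₗ LinearMap.mulRight ℚ (ι ℚ 1) := by
    refine (basisFreeMonoid ℚ (Fin 2)).ext fun w => ?_
    simp only [LinearMap.comp_apply, LinearMap.mulLeft_apply, LinearMap.mulRight_apply,
      LiPiₗ_apply, basisFreeMonoid_apply, Derivation.coeFn_coe]
    rw [← FreeMonoid.lift_eval_of (ι ℚ) 1, ← FreeMonoid.lift_eval_of (ι ℚ) 0, ← map_mul,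
      ← map_mul, LiPi_lift_ι, ← map_mul, LiPi_lift_ι]
    have hw : (FreeMonoid.of 0 * w * FreeMonoid.of 1).toList =
        0 :: (w * FreeMonoid.of 1).toList := rfl
    rw [hw, decode_cons_zero]
    exact (eulerDerivation_Li (decode_append_one_ne_nil w.toList)).symm
  simpa only [LinearMap.comp_apply, LinearMap.mulLeft_apply, LinearMap.mulRight_apply,
    LiPiₗ_apply, Derivation.coeFn_coe] using LinearMap.congr_fun h a

theorem LiPi_ι_zero_pow_mul_ι_one (m : ℕ) : LiPi (ι ℚ 0 ^ m * ι ℚ 1) = Li [m] := by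
  induction m with
  | zero => rw [pow_zero, one_mul, ← FreeMonoid.lift_eval_of (ι ℚ) 1, LiPi_lift_ι]; rfl
  | succ m ih => rw [pow_succ', LiPi_ι_zero_mul_mul_ι_one, ih, eulerDerivation_Li_cons]

theorem LiPi_lieX_mul_mul_ι_one (m : ℕ) (a : FreeAlgebra ℚ (Fin 2)) :
    LiPi (lieX m * a * ι ℚ 1) = Li [m] * LiPi (a * ι ℚ 1) := by
  induction m generalizing a with
  | zero => rw [lieX, mul_assoc, LiPi_ι_one_mul]
  | succ m ih =>
    have hsplit : lieX (m + 1) * a * ι ℚ 1 =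
        ι ℚ 0 * (lieX m * a) * ι ℚ 1 - lieX m * (ι ℚ 0 * a) * ι ℚ 1 := by
      simp only [lieX, sub_mul, mul_assoc]
    rw [hsplit, ← LiPiₗ_apply, map_sub, LiPiₗ_apply, LiPiₗ_apply, LiPi_ι_zero_mul_mul_ι_one, ih,
      ih, LiPi_ι_zero_mul_mul_ι_one, Derivation.leibniz, eulerDerivation_Li_cons, smul_eq_mul,
      smul_eq_mul]
    ring

theorem magnus_succ {r : ℕ} (k : Fin (r + 2) → ℕ) :
    magnus k = lieX (k 0) * magnus (k ∘ Fin.succ) := by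
  rw [magnus, magnus, List.finRange_succ, List.map_cons, List.prod_cons, List.map_map, mul_assoc]
  rfl

theorem Li_prod_eq_LiPi_magnus (r : ℕ) (k : Fin (r + 1) → ℕ) :
    (∏ j : Fin (r + 1), Li [k j]) = LiPi (magnus k * FreeAlgebra.ι ℚ 1) := by
  induction r with
  | zero => simp [magnus, LiPi_ι_zero_pow_mul_ι_one]
  | succ r ih =>
    rw [Fin.prod_univ_succ, magnus_succ, LiPi_lieX_mul_mul_ι_one, ← ih]
    rfl
end

section
/- The functional equation 2·Li⁻_{(0,1,2)} + 2·Li⁻_{(1,1,1)} + Li⁻_{(0,3,0)} = Li⁻_{(0,0,3)} + Li⁻_{(1,2,0)} + Li⁻_{(1,0,2)} + 2·Li⁻_{(0,2,1)} holds among weight-3, depth-3 non-positive multiple polylogarithms as formal power series. -/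
open PowerSeries Finset

/-! ### Auxiliary power sums -/

/-- `gsum c n = ∑_{0 < k < n} k^c` in `ℚ`. -/
def gsum (c n : ℕ) : ℚ := ∑ k ∈ Finset.Ico 1 n, (k : ℚ) ^ c

lemma gsum_zero (c : ℕ) : gsum c 0 = 0 := by simp [gsum]

lemma gsum_succ (c n : ℕ) (hn : 1 ≤ n) :
    gsum c (n + 1) = gsum c n + (n : ℚ) ^ c := by
  simp [gsum, Finset.sum_Ico_succ_top hn]

lemma gsum0 (n : ℕ) (hn : 1 ≤ n) : gsum 0 n = (n : ℚ) - 1 := by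
  induction n with
  | zero => omega
  | succ n ih =>
    rcases Nat.eq_zero_or_pos n with h | h
    · subst h; simp [gsum]
    · rw [gsum_succ 0 n h, ih h]; push_cast; ring

lemma gsum1 (n : ℕ) : gsum 1 n = (n : ℚ) * ((n : ℚ) - 1) / 2 := by
  induction n with
  | zero => simp [gsum]
  | succ n ih =>
    rcases Nat.eq_zero_or_pos n with h | h
    · subst h; simp [gsum]
    · rw [gsum_succ 1 n h, ih]; push_cast; ring

lemma gsum2 (n : ℕ) :
    gsum 2 n = (n : ℚ) * ((n : ℚ) - 1) * (2 * (n : ℚ) - 1) / 6 := by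
  induction n with
  | zero => simp [gsum]
  | succ n ih =>
    rcases Nat.eq_zero_or_pos n with h | h
    · subst h; simp [gsum]
    · rw [gsum_succ 2 n h, ih]; push_cast; ring

lemma gsum3 (n : ℕ) :
    gsum 3 n = ((n : ℚ) * ((n : ℚ) - 1) / 2) ^ 2 := by
  induction n with
  | zero => simp [gsum]
  | succ n ih =>
    rcases Nat.eq_zero_or_pos n with h | h
    · subst h; simp [gsum]
    · rw [gsum_succ 3 n h, ih]; push_cast; ring

/-- `dsum b c n = ∑_{0 < k < m < n} m^b k^c` in `ℚ`. -/
def dsum (b c n : ℕ) : ℚ := ∑ m ∈ Finset.Ico 1 n, (m : ℚ) ^ b * gsum c m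

lemma dsum_succ (b c n : ℕ) (hn : 1 ≤ n) :
    dsum b c (n + 1) = dsum b c n + (n : ℚ) ^ b * gsum c n := by
  simp [dsum, Finset.sum_Ico_succ_top hn]

lemma dsum12 (n : ℕ) :
    dsum 1 2 n = ((n:ℚ) * 2 - (n:ℚ)^2 * 25 + (n:ℚ)^3 * 50 - (n:ℚ)^4 * 35 + (n:ℚ)^5 * 8) / 120 := by
  induction n with
  | zero => simp [dsum]
  | succ n ih =>
    rcases Nat.eq_zero_or_pos n with h | h
    · subst h; norm_num [dsum]
    · rw [dsum_succ 1 2 n h, ih, gsum2]; push_cast; ring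

lemma dsum11 (n : ℕ) :
    dsum 1 1 n = (-(n:ℚ) * 2 + (n:ℚ)^2 * 9 - (n:ℚ)^3 * 10 + (n:ℚ)^4 * 3) / 24 := by
  induction n with
  | zero => simp [dsum]
  | succ n ih =>
    rcases Nat.eq_zero_or_pos n with h | h
    · subst h; norm_num [dsum]
    · rw [dsum_succ 1 1 n h, ih, gsum1]; push_cast; ring

lemma dsum30 (n : ℕ) :
    dsum 3 0 n = (-(n:ℚ) * 2 - (n:ℚ)^2 * 15 + (n:ℚ)^3 * 50 - (n:ℚ)^4 * 45 + (n:ℚ)^5 * 12) / 60 := by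
  induction n with
  | zero => simp [dsum]
  | succ n ih =>
    rcases Nat.eq_zero_or_pos n with h | h
    · subst h; norm_num [dsum]
    · rw [dsum_succ 3 0 n h, ih, gsum0 n h]; push_cast; ring

lemma dsum03 (n : ℕ) :
    dsum 0 3 n = ((n:ℚ) * 2 - (n:ℚ)^2 * 15 + (n:ℚ)^3 * 25 - (n:ℚ)^4 * 15 + (n:ℚ)^5 * 3) / 60 := by
  induction n with
  | zero => simp [dsum]
  | succ n ih =>
    rcases Nat.eq_zero_or_pos n with h | h
    · subst h; norm_num [dsum]
    · rw [dsum_succ 0 3 n h, ih, gsum3]; push_cast; ring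

lemma dsum20 (n : ℕ) :
    dsum 2 0 n = (-(n:ℚ) * 2 + (n:ℚ)^2 * 9 - (n:ℚ)^3 * 10 + (n:ℚ)^4 * 3) / 12 := by
  induction n with
  | zero => simp [dsum]
  | succ n ih =>
    rcases Nat.eq_zero_or_pos n with h | h
    · subst h; norm_num [dsum]
    · rw [dsum_succ 2 0 n h, ih, gsum0 n h]; push_cast; ring

lemma dsum02 (n : ℕ) :
    dsum 0 2 n = (-(n:ℚ) * 2 + (n:ℚ)^2 * 5 - (n:ℚ)^3 * 4 + (n:ℚ)^4) / 12 := by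
  induction n with
  | zero => simp [dsum]
  | succ n ih =>
    rcases Nat.eq_zero_or_pos n with h | h
    · subst h; norm_num [dsum]
    · rw [dsum_succ 0 2 n h, ih, gsum2]; push_cast; ring

lemma dsum21 (n : ℕ) :
    dsum 2 1 n = (-(n:ℚ) * 2 - (n:ℚ)^2 * 15 + (n:ℚ)^3 * 50 - (n:ℚ)^4 * 45 + (n:ℚ)^5 * 12) / 120 := by
  induction n with
  | zero => simp [dsum]
  | succ n ih =>
    rcases Nat.eq_zero_or_pos n with h | h
    · subst h; norm_num [dsum]
    · rw [dsum_succ 2 1 n h, ih, gsum1]; push_cast; ring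

/-! ### `liCoeff` in terms of the auxiliary sums -/

lemma liCoeff_one (c n : ℕ) :
    liCoeff [c] n = if n = 0 then 0 else (n : ℚ) ^ c := by
  rcases Nat.eq_zero_or_pos n with h | h
  · subst h; simp [liCoeff]
  · have h0 : 0 ∈ Finset.range n := Finset.mem_range.2 h
    have : (∑ m ∈ Finset.range n, liCoeff [] m) = 1 := by
      rw [show (liCoeff [] : ℕ → ℚ) = fun m => if m = 0 then 1 else 0 from rfl]
      rw [Finset.sum_ite_eq' (Finset.range n) 0 (fun _ => (1:ℚ))]
      simp [h0]
    simp [liCoeff, this, h.ne']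

lemma sum_range_eq_Ico {f : ℕ → ℚ} (n : ℕ) (hf : f 0 = 0) :
    ∑ m ∈ Finset.range n, f m = ∑ m ∈ Finset.Ico 1 n, f m := by
  rcases Nat.eq_zero_or_pos n with h | h
  · subst h; simp
  · rw [Finset.range_eq_Ico, Finset.sum_eq_sum_Ico_succ_bot h, hf, zero_add]

lemma liCoeff_two (b c n : ℕ) :
    liCoeff [b, c] n = if n = 0 then 0 else (n : ℚ) ^ b * gsum c n := by
  rcases Nat.eq_zero_or_pos n with h | h
  · subst h; simp [liCoeff]
  · have : (∑ m ∈ Finset.range n, liCoeff [c] m) = gsum c n := by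
      rw [show (∑ m ∈ Finset.range n, liCoeff [c] m)
          = ∑ m ∈ Finset.range n, (if m = 0 then 0 else (m : ℚ) ^ c) from
        Finset.sum_congr rfl fun m _ => liCoeff_one c m]
      rw [sum_range_eq_Ico n (by simp)]
      refine Finset.sum_congr rfl fun m hm => ?_
      have : m ≠ 0 := by have := (Finset.mem_Ico.mp hm).1; omega
      simp [gsum, this]
    rw [show liCoeff [b, c] n
        = if n = 0 then 0 else (n : ℚ) ^ b * ∑ m ∈ Finset.range n, liCoeff [c] m from rfl,
      this]

lemma liCoeff_three (a b c n : ℕ) :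
    liCoeff [a, b, c] n = if n = 0 then 0 else (n : ℚ) ^ a * dsum b c n := by
  rcases Nat.eq_zero_or_pos n with h | h
  · subst h; simp [liCoeff]
  · have : (∑ m ∈ Finset.range n, liCoeff [b, c] m) = dsum b c n := by
      rw [show (∑ m ∈ Finset.range n, liCoeff [b, c] m)
          = ∑ m ∈ Finset.range n, (if m = 0 then 0 else (m : ℚ) ^ b * gsum c m) from
        Finset.sum_congr rfl fun m _ => liCoeff_two b c m]
      rw [sum_range_eq_Ico n (by simp)]
      exact Finset.sum_congr rfl fun m hm => by
        have : m ≠ 0 := by have := (Finset.mem_Ico.mp hm).1; omega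
        simp [this]
    rw [show liCoeff [a, b, c] n
        = if n = 0 then 0 else (n : ℚ) ^ a * ∑ m ∈ Finset.range n, liCoeff [b, c] m from rfl,
      this]

theorem Li_depth_three_relation :
    2 • Li [0, 1, 2] + 2 • Li [1, 1, 1] + Li [0, 3, 0] =
      Li [0, 0, 3] + Li [1, 2, 0] + Li [1, 0, 2] + 2 • Li [0, 2, 1] := by
  ext n
  simp only [Li, two_smul, map_add, coeff_mk]
  simp only [liCoeff_three]
  rcases Nat.eq_zero_or_pos n with h | h
  · simp [h]
  · have hn : n ≠ 0 := h.ne'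
    simp only [hn, if_false]
    rw [dsum12, dsum11, dsum30, dsum03, dsum20, dsum02, dsum21]
    ring
end

section
/- The product of depth-one non-positive polylogarithms satisfies Li⁻_5 · Li⁻_4 = −(1/60)·Li⁻_2 + (1/63)·Li⁻_4 + (1/1260)·Li⁻_{10}, i.e. (∑_{m>0} m⁵ z^m)·(∑_{n>0} n⁴ z^n) = −(1/60)∑_{n>0} n² z^n + (1/63)∑_{n>0} n⁴ z^n + (1/1260)∑_{n>0} n^{10} z^n as formal power series over ℚ. -/
open PowerSeries Finset

lemma liCoeff_single_s18 (k : ℕ) (hk : k ≠ 0) (n : ℕ) : liCoeff [k] n = (n : ℚ) ^ k := by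
  cases n with
  | zero => simp [liCoeff, zero_pow hk]
  | succ m =>
      have : ∑ j ∈ Finset.range (m + 1), liCoeff [] j = 1 := by
        simp [liCoeff, Finset.sum_ite_eq' (Finset.range (m + 1)) 0 (fun _ => (1 : ℚ))]
      simp [liCoeff, this]

lemma S5 (n : ℕ) : ∑ i ∈ range (n + 1), (i : ℚ) ^ 5 =
    (1 / 12) * n ^ 2 * (n + 1) ^ 2 * (2 * n ^ 2 + 2 * n - 1) := by
  induction n with
  | zero => simp
  | succ m ih => rw [Finset.sum_range_succ, ih]; push_cast; ring

lemma S6 (n : ℕ) : ∑ i ∈ range (n + 1), (i : ℚ) ^ 6 =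
    (1 / 42) * n * (n + 1) * (2 * n + 1) * (3 * n ^ 4 + 6 * n ^ 3 - 3 * n + 1) := by
  induction n with
  | zero => simp
  | succ m ih => rw [Finset.sum_range_succ, ih]; push_cast; ring

lemma S7 (n : ℕ) : ∑ i ∈ range (n + 1), (i : ℚ) ^ 7 =
    (1 / 24) * n ^ 2 * (n + 1) ^ 2 * (3 * n ^ 4 + 6 * n ^ 3 - n ^ 2 - 4 * n + 2) := by
  induction n with
  | zero => simp
  | succ m ih => rw [Finset.sum_range_succ, ih]; push_cast; ring

lemma S8 (n : ℕ) : ∑ i ∈ range (n + 1), (i : ℚ) ^ 8 =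
    (1 / 90) * n * (n + 1) * (2 * n + 1) *
      (5 * n ^ 6 + 15 * n ^ 5 + 5 * n ^ 4 - 15 * n ^ 3 - n ^ 2 + 9 * n - 3) := by
  induction n with
  | zero => simp
  | succ m ih => rw [Finset.sum_range_succ, ih]; push_cast; ring

lemma S9 (n : ℕ) : ∑ i ∈ range (n + 1), (i : ℚ) ^ 9 =
    (1 / 20) * n ^ 2 * (n + 1) ^ 2 *
      (2 * n ^ 6 + 6 * n ^ 5 + n ^ 4 - 8 * n ^ 3 + n ^ 2 + 6 * n - 3) := by
  induction n with
  | zero => simp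
  | succ m ih => rw [Finset.sum_range_succ, ih]; push_cast; ring

lemma key (n : ℕ) : ∑ i ∈ range (n + 1), (i : ℚ) ^ 5 * ((n : ℚ) - i) ^ 4 =
    -(1 / 60) * (n : ℚ) ^ 2 + (1 / 63) * (n : ℚ) ^ 4 + (1 / 1260) * (n : ℚ) ^ 10 := by
  have expand : ∀ i ∈ range (n + 1), (i : ℚ) ^ 5 * ((n : ℚ) - i) ^ 4 =
      (n : ℚ) ^ 4 * i ^ 5 - 4 * (n : ℚ) ^ 3 * i ^ 6 + 6 * (n : ℚ) ^ 2 * i ^ 7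
        - 4 * (n : ℚ) * i ^ 8 + i ^ 9 := by
    intro i _; ring
  rw [Finset.sum_congr rfl expand]
  simp only [Finset.sum_add_distrib, Finset.sum_sub_distrib, ← Finset.mul_sum]
  rw [S5, S6, S7, S8, S9]
  ring

theorem Li_five_mul_four :
    Li [5] * Li [4] =
      -(1 / 60 : ℚ) • Li [2] + (1 / 63 : ℚ) • Li [4] + (1 / 1260 : ℚ) • Li [10] := by
  ext n
  simp only [map_add, PowerSeries.coeff_mul, PowerSeries.coeff_smul, Li, PowerSeries.coeff_mk,
    liCoeff_single_s18 5 (by norm_num), liCoeff_single_s18 4 (by norm_num),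
    liCoeff_single_s18 2 (by norm_num), liCoeff_single_s18 10 (by norm_num), smul_eq_mul]
  rw [Finset.Nat.sum_antidiagonal_eq_sum_range_succ_mk]
  have : ∀ i ∈ range (n + 1), (i : ℚ) ^ 5 * ((n - i : ℕ) : ℚ) ^ 4 =
      (i : ℚ) ^ 5 * ((n : ℚ) - i) ^ 4 := by
    intro i hi
    rw [Nat.cast_sub (Nat.lt_succ_iff.mp (Finset.mem_range.mp hi))]
  rw [Finset.sum_congr rfl this, key]
end
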